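/- arXiv:1701.02823 — 2 statements merged into one kernel-verified Lean document; each statement's English description precedes it below -/
import Mathlib

section
/- Fast geometric convergence lemma: let {Y_n} and {Z_n}, n = 0,1,2,…, be sequences of positive real numbers satisfying the recursive inequalities Y_{n+1} ≤ C b^n (Y_n^{1+α} + Z_n^{1+κ} Y_n^α) and Z_{n+1} ≤ C b^n (Y_n + Z_n^{1+κ}), where C, b > 1 and κ, α > 0 are given. If Y_0 + Z_0^{1+κ} ≤ (2C)^{−(1+κ)/σ} b^{−(1+κ)/σ^2}, where σ = min{κ, α}, then Y_n → 0 and Z_n → 0 as n → ∞. -/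
open Filter

/-- **Fast geometric convergence lemma.**
Let `{Y n}` and `{Z n}` be sequences of positive real numbers satisfying the recursive
inequalities `Y (n+1) ≤ C bⁿ (Y n ^ (1+α) + Z n ^ (1+κ) * Y n ^ α)` and
`Z (n+1) ≤ C bⁿ (Y n + Z n ^ (1+κ))` where `C, b > 1` and `κ, α > 0`.
If `Y 0 + Z 0 ^ (1+κ) ≤ (2C) ^ (-(1+κ)/σ) * b ^ (-(1+κ)/σ²)` with `σ = min κ α`,
then `Y n → 0` and `Z n → 0` as `n → ∞`. -/
theorem fast_geometric_convergence
    (C b α κ : ℝ) (hC : 1 < C) (hb : 1 < b) (hα : 0 < α) (hκ : 0 < κ)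
    (Y Z : ℕ → ℝ) (hY : ∀ n, 0 < Y n) (hZ : ∀ n, 0 < Z n)
    (hrecY : ∀ n, Y (n + 1) ≤ C * b ^ n * (Y n ^ (1 + α) + Z n ^ (1 + κ) * Y n ^ α))
    (hrecZ : ∀ n, Z (n + 1) ≤ C * b ^ n * (Y n + Z n ^ (1 + κ)))
    (hsmall : Y 0 + Z 0 ^ (1 + κ) ≤
      (2 * C) ^ (-(1 + κ) / min κ α) * b ^ (-(1 + κ) / (min κ α) ^ 2)) :
    Tendsto Y atTop (nhds 0) ∧ Tendsto Z atTop (nhds 0) := by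
  set s := min κ α with hs
  have hs0 : 0 < s := lt_min hκ hα
  have hsκ : s ≤ κ := min_le_left _ _
  have hsα : s ≤ α := min_le_right _ _
  have hbpos : (0:ℝ) < b := lt_trans one_pos hb
  have hCpos : (0:ℝ) < C := lt_trans one_pos hC
  have h2C : (1:ℝ) < 2*C := by nlinarith
  have h2Cpos : (0:ℝ) < 2*C := by linarith
  set θ : ℝ := b ^ (-(1+κ)/s) with hθdef
  have hθpos : 0 < θ := Real.rpow_pos_of_pos hbpos _
  have hexpneg : -(1+κ)/s < 0 := div_neg_of_neg_of_pos (by linarith) hs0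
  have hθlt1 : θ < 1 := Real.rpow_lt_one_of_one_lt_of_neg hb hexpneg
  set M : ℕ → ℝ := fun n => Y n + Z n ^ (1+κ) with hMdef
  have hMpos : ∀ n, 0 < M n := fun n => add_pos (hY n) (Real.rpow_pos_of_pos (hZ n) _)
  set ε : ℝ := (2*C) ^ (-(1+κ)/s) * b ^ (-(1+κ)/s^2) with hεdef
  have hε1 : ε ≤ 1 :=
    mul_le_one₀ (Real.rpow_le_one_of_one_le_of_nonpos h2C.le hexpneg.le)
      (Real.rpow_pos_of_pos hbpos _).le
      (Real.rpow_le_one_of_one_le_of_nonpos hb.le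
        (le_of_lt (div_neg_of_neg_of_pos (by linarith) (pow_pos hs0 2))))
  have hM0 : M 0 ≤ ε := hsmall
  have hYleM : ∀ n, Y n ≤ M n := fun n =>
    le_add_of_nonneg_right (Real.rpow_pos_of_pos (hZ n) _).le
  have hZleM : ∀ n, Z n ^ (1+κ) ≤ M n := fun n => le_add_of_nonneg_left (hY n).le
  -- ε ^ s = (2C)^(-(1+κ)) * θ
  have hεs : ε ^ s = (2*C) ^ (-(1+κ)) * θ := by
    have he : -(1+κ)/s^2*s = -(1+κ)/s := by
      field_simp
    rw [hεdef, Real.mul_rpow (Real.rpow_pos_of_pos h2Cpos _).le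
        (Real.rpow_pos_of_pos hbpos _).le,
      ← Real.rpow_mul h2Cpos.le, ← Real.rpow_mul hbpos.le,
      div_mul_cancel₀ _ hs0.ne', he, hθdef]
  -- Key induction
  have key : ∀ n, M n ≤ θ ^ n * M 0 := by
    intro n
    induction n with
    | zero => simp
    | succ n ih =>
      have hθn1 : θ ^ n ≤ 1 := pow_le_one₀ hθpos.le hθlt1.le
      have hm1 : M n ≤ 1 := by
        calc M n ≤ θ ^ n * M 0 := ih
          _ ≤ 1 * 1 := by
              exact mul_le_mul hθn1 (hM0.trans hε1) (hMpos 0).le one_pos.le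
          _ = 1 := one_mul 1
      have hmpos := hMpos n
      have hbn1 : (1:ℝ) ≤ b ^ n := one_le_pow₀ hb.le
      have hbnpos : (0:ℝ) < b ^ n := pow_pos hbpos n
      -- bound on Y (n+1)
      have hYn : Y (n+1) ≤ C * b ^ n * M n ^ (1+α) := by
        have h1 : Y n ^ (1+α) + Z n ^ (1+κ) * Y n ^ α = M n * Y n ^ α := by
          rw [hMdef]
          have : Y n ^ (1+α) = Y n * Y n ^ α := by
            rw [Real.rpow_add (hY n), Real.rpow_one]
          rw [this]; ring
        have h2 : Y n ^ α ≤ M n ^ α :=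
          Real.rpow_le_rpow (hY n).le (hYleM n) hα.le
        have h3 : M n * Y n ^ α ≤ M n ^ (1+α) := by
          rw [Real.rpow_add hmpos, Real.rpow_one]
          exact mul_le_mul_of_nonneg_left h2 hmpos.le
        calc Y (n+1) ≤ C * b ^ n * (Y n ^ (1+α) + Z n ^ (1+κ) * Y n ^ α) := hrecY n
          _ = C * b ^ n * (M n * Y n ^ α) := by rw [h1]
          _ ≤ C * b ^ n * M n ^ (1+α) := by
              exact mul_le_mul_of_nonneg_left h3 (by positivity)
      -- bound on Z (n+1) ^ (1+κ)
      have hZn : Z (n+1) ^ (1+κ) ≤ C ^ (1+κ) * (b ^ n) ^ (1+κ) * M n ^ (1+κ) := by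
        have h1 : Z (n+1) ^ (1+κ) ≤ (C * b ^ n * M n) ^ (1+κ) :=
          Real.rpow_le_rpow (hZ (n+1)).le (hrecZ n) (by linarith)
        calc Z (n+1) ^ (1+κ) ≤ (C * b ^ n * M n) ^ (1+κ) := h1
          _ = C ^ (1+κ) * (b ^ n) ^ (1+κ) * M n ^ (1+κ) := by
              rw [Real.mul_rpow (by positivity) hmpos.le,
                Real.mul_rpow hCpos.le hbnpos.le]
      -- exponent reductions using M n ≤ 1
      have hred1 : M n ^ (1+α) ≤ M n ^ (1+s) :=
        Real.rpow_le_rpow_of_exponent_ge hmpos hm1 (by linarith)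
      have hred2 : M n ^ (1+κ) ≤ M n ^ (1+s) :=
        Real.rpow_le_rpow_of_exponent_ge hmpos hm1 (by linarith)
      have hC1 : C ≤ C ^ (1+κ) := by
        nth_rewrite 1 [← Real.rpow_one C]
        exact Real.rpow_le_rpow_of_exponent_le hC.le (by linarith)
      have hb1 : b ^ n ≤ (b ^ n) ^ (1+κ) := by
        nth_rewrite 1 [← Real.rpow_one (b ^ n)]
        exact Real.rpow_le_rpow_of_exponent_le hbn1 (by linarith)
      have hMstep : M (n+1) ≤ (2*C) ^ (1+κ) * (b ^ n) ^ (1+κ) * M n ^ (1+s) := by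
        have h4 : M (n+1) ≤ 2 * (C ^ (1+κ) * (b ^ n) ^ (1+κ) * M n ^ (1+s)) := by
          have e1 : Y (n+1) ≤ C ^ (1+κ) * (b ^ n) ^ (1+κ) * M n ^ (1+s) := by
            calc Y (n+1) ≤ C * b ^ n * M n ^ (1+α) := hYn
              _ ≤ C ^ (1+κ) * (b ^ n) ^ (1+κ) * M n ^ (1+s) :=
                  mul_le_mul (mul_le_mul hC1 hb1 hbnpos.le
                      (Real.rpow_pos_of_pos hCpos _).le) hred1
                    (Real.rpow_pos_of_pos hmpos _).le (by positivity)
          have e2 : Z (n+1) ^ (1+κ) ≤ C ^ (1+κ) * (b ^ n) ^ (1+κ) * M n ^ (1+s) := by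
            calc Z (n+1) ^ (1+κ) ≤ C ^ (1+κ) * (b ^ n) ^ (1+κ) * M n ^ (1+κ) := hZn
              _ ≤ C ^ (1+κ) * (b ^ n) ^ (1+κ) * M n ^ (1+s) :=
                  mul_le_mul_of_nonneg_left hred2 (by positivity)
          have : M (n+1) = Y (n+1) + Z (n+1) ^ (1+κ) := rfl
          rw [this]; linarith
        have h7 : 2 * C ^ (1+κ) ≤ (2*C) ^ (1+κ) := by
          rw [Real.mul_rpow (by norm_num) hCpos.le]
          refine mul_le_mul_of_nonneg_right ?_ (Real.rpow_pos_of_pos hCpos _).le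
          nth_rewrite 1 [← Real.rpow_one 2]
          exact Real.rpow_le_rpow_of_exponent_le (by norm_num) (by linarith)
        calc M (n+1) ≤ 2 * (C ^ (1+κ) * (b ^ n) ^ (1+κ) * M n ^ (1+s)) := h4
          _ = (2 * C ^ (1+κ)) * ((b ^ n) ^ (1+κ) * M n ^ (1+s)) := by ring
          _ ≤ (2*C) ^ (1+κ) * ((b ^ n) ^ (1+κ) * M n ^ (1+s)) := by
              apply mul_le_mul_of_nonneg_right h7 (by positivity)
          _ = (2*C) ^ (1+κ) * (b ^ n) ^ (1+κ) * M n ^ (1+s) := by ring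
      -- now the arithmetic
      have hmθn : M n ^ s ≤ (θ ^ n) ^ s * ε ^ s := by
        calc M n ^ s ≤ (θ ^ n * M 0) ^ s := Real.rpow_le_rpow hmpos.le ih hs0.le
          _ = (θ ^ n) ^ s * M 0 ^ s := Real.mul_rpow (by positivity) (hMpos 0).le
          _ ≤ (θ ^ n) ^ s * ε ^ s := by
              gcongr
              exact (hMpos 0).le
      have hbθ : (b ^ n) ^ (1+κ) * (θ ^ n) ^ s = 1 := by
        rw [hθdef, ← Real.rpow_natCast b n, ← Real.rpow_natCast (b ^ (-(1+κ)/s)) n,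
          ← Real.rpow_mul hbpos.le, ← Real.rpow_mul hbpos.le,
          ← Real.rpow_mul hbpos.le, ← Real.rpow_add hbpos]
        rw [show (n:ℝ) * (1+κ) + -(1+κ)/s * n * s = 0 by field_simp; ring]
        exact Real.rpow_zero b
      have h2Ccancel : (2*C) ^ (1+κ) * (2*C) ^ (-(1+κ)) = 1 := by
        rw [← Real.rpow_add h2Cpos, show (1+κ) + -(1+κ) = 0 by ring, Real.rpow_zero]
      have hfinal : (2*C) ^ (1+κ) * (b ^ n) ^ (1+κ) * M n ^ (1+s) ≤ θ ^ (n+1) * M 0 := by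
        have hm1s : M n ^ (1+s) = M n * M n ^ s := by
          rw [Real.rpow_add hmpos, Real.rpow_one]
        calc (2*C) ^ (1+κ) * (b ^ n) ^ (1+κ) * M n ^ (1+s)
            = (2*C) ^ (1+κ) * (b ^ n) ^ (1+κ) * (M n * M n ^ s) := by rw [hm1s]
          _ ≤ (2*C) ^ (1+κ) * (b ^ n) ^ (1+κ) * ((θ ^ n * M 0) * ((θ ^ n) ^ s * ε ^ s)) := by
              refine mul_le_mul_of_nonneg_left ?_ (by positivity)
              exact mul_le_mul ih hmθn (Real.rpow_pos_of_pos hmpos _).le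
                (mul_pos (pow_pos hθpos n) (hMpos 0)).le
          _ = ((2*C) ^ (1+κ) * ε ^ s) * ((b ^ n) ^ (1+κ) * (θ ^ n) ^ s) * (θ ^ n * M 0) := by
              ring
          _ = ((2*C) ^ (1+κ) * (2*C) ^ (-(1+κ))) * (θ * θ ^ n * M 0) := by
              rw [hbθ, hεs]; ring
          _ = θ ^ (n+1) * M 0 := by
              rw [h2Ccancel, pow_succ]; ring
      exact hMstep.trans hfinal
  -- conclude
  have hMtend : Tendsto M atTop (nhds 0) := by
    have h1 : Tendsto (fun n => θ ^ n * M 0) atTop (nhds 0) := by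
      have := (tendsto_pow_atTop_nhds_zero_of_lt_one hθpos.le hθlt1).mul_const (M 0)
      simpa using this
    exact squeeze_zero (fun n => (hMpos n).le) key h1
  constructor
  · exact squeeze_zero (fun n => (hY n).le) hYleM hMtend
  · have hZle : ∀ n, Z n ≤ M n ^ (1/(1+κ)) := by
      intro n
      have h1 : Z n ^ (1+κ) ≤ M n := hZleM n
      have h2 : (Z n ^ (1+κ)) ^ (1/(1+κ)) ≤ M n ^ (1/(1+κ)) :=
        Real.rpow_le_rpow (Real.rpow_pos_of_pos (hZ n) _).le h1 (by positivity)
      rwa [← Real.rpow_mul (hZ n).le, mul_one_div, div_self (by linarith : (1:ℝ)+κ ≠ 0),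
        Real.rpow_one] at h2
    have hcomp : Tendsto (fun n => M n ^ (1/(1+κ))) atTop (nhds 0) := by
      have hc : ContinuousAt (fun x : ℝ => x ^ (1/(1+κ))) 0 :=
        Real.continuousAt_rpow_const 0 _ (Or.inr (by positivity))
      have h0 : (0:ℝ) ^ (((1:ℝ)+κ)⁻¹) = 0 := Real.zero_rpow (by positivity)
      have := hc.tendsto.comp hMtend
      simpa [Function.comp_def, h0] using this
    exact squeeze_zero (fun n => (hZ n).le) hZle hcomp
end

section
/- Time-slice selection from a measure bound: let k, ρ, T be positive constants and let n be a measurable nonnegative function on Q = K_ρ × (−T, 0). If there is ν_1 ∈ (0,1) such that |Q ∩ {n > μ_+ − k}| ≤ (1 − ν_1)|Q|, then there exists τ_1 ∈ (−T, −ν_1 T/(2 − ν_1)) for which |{x ∈ K_ρ : n(x, τ_1) > μ_+ − k}| ≤ (1 − ν_1/2)|K_ρ|. -/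
/-!
On the interval `I = (-T, -ν₁T/(2 - ν₁))` the bad set has measure at most
`(1 - ν₁)|K_ρ| T = (1 - ν₁/2)|K_ρ| |I|`, by the choice of the right endpoint. By Tonelli the
mean over `I` of the measures of the time slices is therefore at most `(1 - ν₁/2)|K_ρ|`, and
some slice does not exceed the mean.
-/

open MeasureTheory Real Set
open scoped ENNReal

noncomputable section

/-- `Euc d` is Euclidean space `ℝ^d`. -/
abbrev Euc (d : ℕ) := EuclideanSpace ℝ (Fin d)

/-- `cube d ρ` is the open cube `K_ρ` in `ℝ^d` centered at the origin with side length `2ρ`. -/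
def cube (d : ℕ) (ρ : ℝ) : Set (Euc d) := {x | ∀ i, |x i| < ρ}

theorem measurableSet_cube (d : ℕ) (ρ : ℝ) : MeasurableSet (cube d ρ) := by
  have : cube d ρ = ⋂ i, (fun x : Euc d => x i) ⁻¹' Ioo (-ρ) ρ := by
    ext x; simp [cube, abs_lt]
  rw [this]
  exact MeasurableSet.iInter fun i =>
    (EuclideanSpace.proj i : Euc d →L[ℝ] ℝ).continuous.measurable measurableSet_Ioo

theorem exists_measure_slice_le {X Y : Type*} [MeasurableSpace X] [MeasurableSpace Y]
    {μ : Measure X} {ν : Measure Y} [SFinite μ] [SFinite ν] {S : Set (X × Y)}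
    (hS : MeasurableSet S) {s : Set Y} (hs₀ : ν s ≠ 0) (hs : ν s ≠ ∞) {c : ℝ≥0∞}
    (hSc : μ.prod ν S ≤ c * ν s) : ∃ t ∈ s, μ ((fun x => (x, t)) ⁻¹' S) ≤ c := by
  obtain ⟨t, ht, hle⟩ := exists_le_setLAverage hs₀ hs
    (measurable_measure_prodMk_right (μ := μ) hS).aemeasurable
  refine ⟨t, ht, hle.trans ?_⟩
  calc ⨍⁻ y in s, μ ((fun x => (x, y)) ⁻¹' S) ∂ν
      = (∫⁻ y in s, μ ((fun x => (x, y)) ⁻¹' S) ∂ν) / ν s := setLAverage_eq ν _ s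
    _ ≤ μ.prod ν S / ν s := by
      rw [Measure.prod_apply_symm hS]
      exact ENNReal.div_le_div_right (setLIntegral_le_lintegral _ _) _
    _ ≤ c := (ENNReal.div_le_iff hs₀ hs).2 hSc

theorem neg_mul_div_two_sub_mem_Ioo {T ν : ℝ} (hT : 0 < T) (hν : ν ∈ Ioo (0:ℝ) 1) :
    -(ν * T) / (2 - ν) ∈ Ioo (-T) 0 := by
  obtain ⟨hν₀, hν₁⟩ := hν
  have h2ν : 0 < 2 - ν := by linarith
  exact ⟨by rw [lt_div_iff₀ h2ν]; nlinarith, div_neg_of_neg_of_pos (by nlinarith) h2ν⟩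

theorem ofReal_one_sub_half_mul_volume_Ioo {T ν : ℝ} (hT : 0 < T) (hν : ν ∈ Ioo (0:ℝ) 1) :
    ENNReal.ofReal (1 - ν / 2) * volume (Ioo (-T) (-(ν * T) / (2 - ν)))
      = ENNReal.ofReal (1 - ν) * ENNReal.ofReal T := by
  obtain ⟨hν₀, hν₁⟩ := hν
  have h2ν : 2 - ν ≠ 0 := by linarith
  rw [Real.volume_Ioo, ← ENNReal.ofReal_mul (by linarith), ← ENNReal.ofReal_mul (by linarith)]
  congr 1
  field_simp
  ring

theorem time_slice_selection_general
    (d : ℕ) (k ρ T μp ν₁ : ℝ)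
    (hT : 0 < T) (hν : ν₁ ∈ Ioo (0:ℝ) 1)
    (n : Euc d → ℝ → ℝ)
    (hmeas : Measurable (Function.uncurry n))
    (hsmall : volume ((cube d ρ ×ˢ Ioo (-T) (0:ℝ)) ∩
        {p : Euc d × ℝ | μp - k < n p.1 p.2})
      ≤ ENNReal.ofReal (1 - ν₁) * volume (cube d ρ ×ˢ Ioo (-T) (0:ℝ))) :
    ∃ τ₁ ∈ Ioo (-T) (-(ν₁ * T) / (2 - ν₁)),
      volume {x : Euc d | x ∈ cube d ρ ∧ μp - k < n x τ₁}
        ≤ ENNReal.ofReal (1 - ν₁ / 2) * volume (cube d ρ) := by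
  set a := -(ν₁ * T) / (2 - ν₁)
  obtain ⟨hTa, ha₀⟩ : a ∈ Ioo (-T) 0 := neg_mul_div_two_sub_mem_Ioo hT hν
  set S := (cube d ρ ×ˢ Ioo (-T) (0:ℝ)) ∩ {p : Euc d × ℝ | μp - k < n p.1 p.2}
  have hS : MeasurableSet S :=
    ((measurableSet_cube d ρ).prod measurableSet_Ioo).inter (hmeas measurableSet_Ioi)
  have hSc : (volume : Measure (Euc d)).prod volume S
      ≤ ENNReal.ofReal (1 - ν₁ / 2) * volume (cube d ρ) * volume (Ioo (-T) a) :=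
    calc (volume : Measure (Euc d)).prod volume S = volume S := by rw [Measure.volume_eq_prod]
      _ ≤ ENNReal.ofReal (1 - ν₁) * (volume (cube d ρ) * volume (Ioo (-T) (0:ℝ))) := by
        rwa [Measure.volume_eq_prod, Measure.prod_prod] at hsmall
      _ = ENNReal.ofReal (1 - ν₁ / 2) * volume (cube d ρ) * volume (Ioo (-T) a) := by
        rw [show volume (Ioo (-T) (0:ℝ)) = ENNReal.ofReal T by simp [Real.volume_Ioo],
          mul_left_comm, ← ofReal_one_sub_half_mul_volume_Ioo hT hν]
        ring
  obtain ⟨τ, hτ, hle⟩ := exists_measure_slice_le hS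
    (by simp [Real.volume_Ioo]; linarith) (by simp [Real.volume_Ioo]) hSc
  refine ⟨τ, hτ, le_of_eq_of_le (congrArg volume ?_) hle⟩
  ext x
  simp [S, hτ.1, hτ.2.trans ha₀]

/-- **Time-slice selection from a measure bound.**
Let `k, ρ, T` be positive constants and let `n` be a measurable nonnegative function on
`Q = K_ρ × (−T, 0)`.  If there is `ν₁ ∈ (0,1)` such that
`|Q ∩ {n > μ₊ − k}| ≤ (1 − ν₁)|Q|`, then there exists
`τ₁ ∈ (−T, −ν₁ T/(2 − ν₁))` for which
`|{x ∈ K_ρ : n(x, τ₁) > μ₊ − k}| ≤ (1 − ν₁/2)|K_ρ|`. -/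
theorem time_slice_selection
    (d : ℕ) (k ρ T μp ν₁ : ℝ)
    (hk : 0 < k) (hρ : 0 < ρ) (hT : 0 < T) (hν : ν₁ ∈ Ioo (0:ℝ) 1)
    (n : Euc d → ℝ → ℝ)
    (hmeas : Measurable (Function.uncurry n))
    (hnonneg : ∀ x : Euc d, ∀ t ∈ Ioo (-T) (0:ℝ), x ∈ cube d ρ → 0 ≤ n x t)
    (hsmall : volume ((cube d ρ ×ˢ Ioo (-T) (0:ℝ)) ∩
        {p : Euc d × ℝ | μp - k < n p.1 p.2})
      ≤ ENNReal.ofReal (1 - ν₁) * volume (cube d ρ ×ˢ Ioo (-T) (0:ℝ))) :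
    ∃ τ₁ ∈ Ioo (-T) (-(ν₁ * T) / (2 - ν₁)),
      volume {x : Euc d | x ∈ cube d ρ ∧ μp - k < n x τ₁}
        ≤ ENNReal.ofReal (1 - ν₁ / 2) * volume (cube d ρ) :=
  time_slice_selection_general d k ρ T μp ν₁ hT hν n hmeas hsmall
end
end
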